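/- arXiv:1208.6238 — 9 statements merged into one kernel-verified Lean document; each statement's English description precedes it below -/
import Mathlib

section
/- For every integer m ≥ 2, the real function f_m(x) = (2 + (x^(2m))^(1/(m+1)))^((m+1)/(2m)) / sqrt(4 + x^2) attains its maximum over positive reals at x = 2^((m+1)/2). -/
/-!
Substituting `s = x ^ (2 / (m + 1))` turns `f_m(x) ^ (2m)` into
`(2 + s ^ m) ^ (m + 1) / (4 + s ^ (m + 1)) ^ m`. Up to the factor `2 ^ m`, the numerator and
denominator are moments `∑ w g ^ m` and `∑ w g ^ (m + 1)` of the two-point data `g = (2, s)` with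
weights `w = (2, 2 ^ m)`, so Hölder's moment inequality `M_m ^ (m + 1) ≤ M_0 M_(m+1) ^ m` bounds
the quotient by `(2 + 2 ^ m) / 2 ^ m`, its value at `s = 2`, i.e. at `x = 2 ^ ((m + 1) / 2)`.
-/

open Real Finset

theorem Real.sum_mul_pow_pow_succ_le {ι : Type*} (s : Finset ι) (n : ℕ) {w g : ι → ℝ}
    (hw : ∀ i, 0 ≤ w i) (hg : ∀ i, 0 ≤ g i) :
    (∑ i ∈ s, w i * g i ^ n) ^ (n + 1) ≤
      (∑ i ∈ s, w i) * (∑ i ∈ s, w i * g i ^ (n + 1)) ^ n := by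
  rcases n.eq_zero_or_pos with rfl | hn
  · simp
  have hn : (0 : ℝ) < n := by exact_mod_cast hn
  set p : ℝ := (n + 1) / n with hp_def
  have hp : 1 ≤ p := by rw [le_div_iff₀ hn]; linarith
  have hpow : ∀ i, (g i ^ n) ^ p = g i ^ (n + 1) := fun i => by
    rw [← rpow_natCast, ← rpow_mul (hg i), mul_div_cancel₀ _ hn.ne']
    norm_cast
  have holder := inner_le_weight_mul_Lp_of_nonneg s hp w (fun i => g i ^ n) hw
    (fun i => pow_nonneg (hg i) n)
  simp only [hpow] at holder
  calc (∑ i ∈ s, w i * g i ^ n) ^ (n + 1)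
      ≤ ((∑ i ∈ s, w i) ^ (1 - p⁻¹) * (∑ i ∈ s, w i * g i ^ (n + 1)) ^ p⁻¹) ^ (n + 1) :=
        pow_le_pow_left₀ (sum_nonneg fun i _ => mul_nonneg (hw i) (pow_nonneg (hg i) n)) holder _
    _ = (∑ i ∈ s, w i) * (∑ i ∈ s, w i * g i ^ (n + 1)) ^ n := by
        have hW : 0 ≤ ∑ i ∈ s, w i := sum_nonneg fun i _ => hw i
        have hS : 0 ≤ ∑ i ∈ s, w i * g i ^ (n + 1) :=
          sum_nonneg fun i _ => mul_nonneg (hw i) (pow_nonneg (hg i) _)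
        have h1 : (1 - p⁻¹) * (n + 1 : ℕ) = 1 := by rw [hp_def]; push_cast; field_simp; ring
        have h2 : p⁻¹ * (n + 1 : ℕ) = n := by rw [hp_def]; push_cast; field_simp
        rw [mul_pow, ← rpow_mul_natCast hW, ← rpow_mul_natCast hS, h1, h2, rpow_one, rpow_natCast]

/-- `f_m(x) ^ (2m)` in the variable `s = x ^ (2 / (m + 1))`. -/
noncomputable def boundRatio (m : ℕ) (s : ℝ) : ℝ :=
  (2 + s ^ m) ^ (m + 1) / (4 + s ^ (m + 1)) ^ m

theorem two_pow_mul_pow_succ_le (m : ℕ) {s : ℝ} (hs : 0 ≤ s) :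
    2 ^ m * (2 + s ^ m) ^ (m + 1) ≤ (2 + 2 ^ m) * (4 + s ^ (m + 1)) ^ m := by
  have h := Real.sum_mul_pow_pow_succ_le univ m (w := ![2, 2 ^ m]) (g := ![2, s])
    (by simp [Fin.forall_fin_two]) (by simp [Fin.forall_fin_two, hs])
  simp only [Fin.sum_univ_two, Matrix.cons_val_zero, Matrix.cons_val_one] at h
  rw [show (2 : ℝ) * 2 ^ m + 2 ^ m * s ^ m = 2 ^ m * (2 + s ^ m) by ring,
    show (2 : ℝ) * 2 ^ (m + 1) + 2 ^ m * s ^ (m + 1) = 2 ^ m * (4 + s ^ (m + 1)) by ring,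
    mul_pow, mul_pow, pow_succ (2 ^ m : ℝ)] at h
  refine le_of_mul_le_mul_left ?_ (by positivity : (0 : ℝ) < (2 ^ m) ^ m)
  linarith

theorem boundRatio_le_boundRatio_two (m : ℕ) {s : ℝ} (hs : 0 ≤ s) :
    boundRatio m s ≤ boundRatio m 2 := by
  have h4 : (4 : ℝ) + 2 ^ (m + 1) = 2 * (2 + 2 ^ m) := by ring
  unfold boundRatio
  rw [div_le_div_iff₀ (by positivity) (by positivity), h4, mul_pow, pow_succ (2 + 2 ^ m)]
  calc (2 + s ^ m) ^ (m + 1) * (2 ^ m * (2 + 2 ^ m) ^ m)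
      = (2 + 2 ^ m) ^ m * (2 ^ m * (2 + s ^ m) ^ (m + 1)) := by ring
    _ ≤ (2 + 2 ^ m) ^ m * ((2 + 2 ^ m) * (4 + s ^ (m + 1)) ^ m) :=
        mul_le_mul_of_nonneg_left (two_pow_mul_pow_succ_le m hs) (by positivity)
    _ = _ := by ring

theorem rpow_boundRatio {m : ℕ} (hm : m ≠ 0) {s : ℝ} (hs : 0 ≤ s) :
    boundRatio m s ^ (1 / (2 * (m : ℝ))) =
      (2 + s ^ m) ^ (((m : ℝ) + 1) / (2 * m)) / √(4 + s ^ (m + 1)) := by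
  have hm : (m : ℝ) ≠ 0 := by exact_mod_cast hm
  unfold boundRatio
  rw [div_rpow (by positivity) (by positivity), ← rpow_natCast (2 + s ^ m),
    ← rpow_natCast (4 + s ^ (m + 1)),
    ← rpow_mul (by positivity), ← rpow_mul (by positivity), sqrt_eq_rpow]
  congr 2
  · push_cast; ring
  · field_simp

theorem fm_eq_rpow_boundRatio {m : ℕ} (hm : m ≠ 0) {x : ℝ} (hx : 0 < x) :
    (2 + (x ^ (2 * (m : ℝ))) ^ (1 / ((m : ℝ) + 1))) ^ (((m : ℝ) + 1) / (2 * m)) / √(4 + x ^ 2) =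
      boundRatio m (x ^ (2 / ((m : ℝ) + 1))) ^ (1 / (2 * (m : ℝ))) := by
  have hs : ∀ k : ℕ, (x ^ (2 / ((m : ℝ) + 1))) ^ k = x ^ (2 * k / ((m : ℝ) + 1)) := fun k => by
    rw [← rpow_mul_natCast hx.le]; ring_nf
  rw [rpow_boundRatio hm (by positivity), hs, hs, ← rpow_mul hx.le, ← rpow_natCast x 2]
  congr 5
  · ring
  · push_cast; field_simp

theorem stmt_1 (m : ℕ) (hm : 2 ≤ m) :
    IsMaxOn
      (fun x : ℝ =>
        (2 + (x ^ (2 * (m:ℝ))) ^ (1 / ((m:ℝ) + 1))) ^ (((m:ℝ) + 1) / (2 * m)) /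
          Real.sqrt (4 + x ^ 2))
      (Set.Ioi (0:ℝ)) ((2:ℝ) ^ (((m:ℝ) + 1) / 2)) := by
  have hm0 : m ≠ 0 := by omega
  have hx₀ : ((2 : ℝ) ^ (((m : ℝ) + 1) / 2)) ^ (2 / ((m : ℝ) + 1)) = 2 := by
    rw [← rpow_mul zero_le_two, div_mul_div_cancel₀' (by positivity), div_self two_ne_zero,
      rpow_one]
  refine isMaxOn_iff.2 fun x (hx : 0 < x) => ?_
  rw [fm_eq_rpow_boundRatio hm0 hx, fm_eq_rpow_boundRatio hm0 (by positivity), hx₀]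
  exact rpow_le_rpow (by unfold boundRatio; positivity)
    (boundRatio_le_boundRatio_two m (by positivity)) (by positivity)
end

section
/- For every integer m ≥ 2 and every positive real x, f_m(x) = (2 + (x^(2m))^(1/(m+1)))^((m+1)/(2m)) / sqrt(4 + x^2) satisfies f_m(x) ≤ (2 + 2^m)^((m+1)/(2m)) / sqrt(4 + 2^(m+1)). -/
/-!
With `q = (m+1)/m` and `t = x^(2m/(m+1))` one has `t^q = x^2`, so `f_m(x)^2 = (2+t)^q / (4+t^q)`.
Convexity of `s ↦ s^q`, in the weighted form `(u+v)^q ≤ (a+b)^(q-1) (u^q/a^(q-1) + v^q/b^(q-1))`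
with the weights `a = 2`, `b = 2^m` chosen so that equality holds at `t = 2^m`, gives
`(2+t)^q ≤ (2+2^m)^(1/m)/2 · (4+t^q)`, which is the claim with equality at `x^2 = 2^(m+1)`.
-/

open Real

lemma div_mul_rpow_mul_div {p s c w : ℝ} (hs : 0 < s) (hc : 0 < c) (hw : 0 ≤ w) :
    c / s * (w * s / c) ^ p = s ^ (p - 1) * (w ^ p / c ^ (p - 1)) := by
  rw [div_rpow (by positivity) hc.le, mul_rpow hw hs.le, rpow_sub_one hs.ne',
    rpow_sub_one hc.ne']
  field_simp

theorem add_rpow_le_rpow_add_mul {p u v a b : ℝ} (hp : 1 ≤ p) (hu : 0 ≤ u) (hv : 0 ≤ v)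
    (ha : 0 < a) (hb : 0 < b) :
    (u + v) ^ p ≤ (a + b) ^ (p - 1) * (u ^ p / a ^ (p - 1) + v ^ p / b ^ (p - 1)) := by
  have hs : 0 < a + b := by positivity
  have hmean : a / (a + b) * (u * (a + b) / a) + b / (a + b) * (v * (a + b) / b) = u + v := by
    field_simp
  have hjensen : (a / (a + b) * (u * (a + b) / a) + b / (a + b) * (v * (a + b) / b)) ^ p ≤
      a / (a + b) * (u * (a + b) / a) ^ p + b / (a + b) * (v * (a + b) / b) ^ p :=
    (convexOn_rpow hp).2 (Set.mem_Ici.2 (by positivity)) (Set.mem_Ici.2 (by positivity))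
      (by positivity) (by positivity) (by field_simp)
  rwa [hmean, div_mul_rpow_mul_div hs ha hu, div_mul_rpow_mul_div hs hb hv, ← mul_add] at hjensen

lemma two_add_rpow_le {M t : ℝ} (hM : 0 < M) (ht : 0 ≤ t) :
    (2 + t) ^ ((M + 1) / M) ≤ (2 + 2 ^ M) ^ (1 / M) / 2 * (4 + t ^ ((M + 1) / M)) := by
  have hq : (M + 1) / M - 1 = 1 / M := by field_simp; ring
  have h2 : (2 : ℝ) ^ ((M + 1) / M) / 2 ^ (1 / M) = 2 := by
    rw [← rpow_sub two_pos, ← hq, sub_sub_cancel, rpow_one]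
  have h2M : ((2 : ℝ) ^ M) ^ (1 / M) = 2 := by
    rw [← rpow_mul zero_le_two, mul_one_div_cancel hM.ne', rpow_one]
  have hradon := add_rpow_le_rpow_add_mul (p := (M + 1) / M) (by rw [le_div_iff₀ hM]; linarith)
    zero_le_two ht two_pos (by positivity : (0 : ℝ) < 2 ^ M)
  rw [hq, h2, h2M] at hradon
  linarith

lemma two_add_two_rpow_rpow_div {M : ℝ} (hM : 0 < M) :
    (2 + (2 : ℝ) ^ M) ^ ((M + 1) / M) / (4 + 2 ^ (M + 1)) = (2 + 2 ^ M) ^ (1 / M) / 2 := by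
  have hpos : (0 : ℝ) < 2 + 2 ^ M := by positivity
  rw [show (M + 1) / M = 1 / M + 1 by field_simp; ring, rpow_add hpos, rpow_one,
    rpow_add_one two_ne_zero]
  field_simp
  ring

theorem two_add_rpow_div_le {M t : ℝ} (hM : 0 < M) (ht : 0 ≤ t) :
    (2 + t) ^ ((M + 1) / M) / (4 + t ^ ((M + 1) / M)) ≤
      (2 + (2 : ℝ) ^ M) ^ ((M + 1) / M) / (4 + 2 ^ (M + 1)) := by
  rw [two_add_two_rpow_rpow_div hM, div_le_iff₀ (by positivity)]
  exact two_add_rpow_le hM ht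

lemma rpow_div_two_div_sqrt {A : ℝ} (hA : 0 ≤ A) (q B : ℝ) :
    A ^ (q / 2) / √B = √(A ^ q / B) := by
  rw [sqrt_div (rpow_nonneg hA q), sqrt_eq_rpow (A ^ q), ← rpow_mul hA, mul_one_div]

lemma rpow_rpow_eq_sq {x M : ℝ} (hx : 0 ≤ x) (hM : 0 < M) :
    ((x ^ (2 * M)) ^ (1 / (M + 1))) ^ ((M + 1) / M) = x ^ 2 := by
  rw [← rpow_mul hx, ← rpow_mul hx, ← rpow_two]
  congr 1
  field_simp

theorem stmt_2 (m : ℕ) (hm : 2 ≤ m) (x : ℝ) (hx : 0 < x) :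
    (2 + (x ^ (2 * (m:ℝ))) ^ (1 / ((m:ℝ) + 1))) ^ (((m:ℝ) + 1) / (2 * m)) /
        Real.sqrt (4 + x ^ 2) ≤
      (2 + (2:ℝ) ^ (m:ℝ)) ^ (((m:ℝ) + 1) / (2 * m)) /
        Real.sqrt (4 + 2 ^ ((m:ℝ) + 1)) := by
  have hM : (0 : ℝ) < m := by exact_mod_cast (show 0 < m by omega)
  have ht : 0 ≤ (x ^ (2 * (m:ℝ))) ^ (1 / ((m:ℝ) + 1)) := by positivity
  rw [show ((m:ℝ) + 1) / (2 * m) = ((m:ℝ) + 1) / m / 2 by ring,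
    rpow_div_two_div_sqrt (by positivity), rpow_div_two_div_sqrt (by positivity),
    ← rpow_rpow_eq_sq hx.le hM]
  exact sqrt_le_sqrt (two_add_rpow_div_le hM ht)
end

section
/- The supremum norm of the 2-homogeneous polynomial P(z₁,z₂) = a z₁² + b z₂² + c z₁ z₂ on the closed unit bidisc in ℂ², where a, b, c are real with ab < 0 and |c(a+b)| ≤ 4|ab|, equals (|a| + |b|)·sqrt(1 + c²/(4|ab|)). -/
/-!
With `n₁ = |z₁|²`, `n₂ = |z₂|²` and `x = Re (z₁ z̄₂)`, one has the identity
`-4ab |P|² = (c² - 4ab)(a n₁ - b n₂)² - (4ab x + c(a n₁ + b n₂))²`, and `|a n₁ - b n₂| ≤ |a - b|`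
when `ab < 0`; this gives `|P|² ≤ (a - b)² (1 + c²/(4|ab|))` on the bidisc.
On the torus `z₂ = z̄₁`, writing `t = Re z₁²`, one gets `|P|² = ((a + b)t + c)² + (a - b)²(1 - t²)`,
a concave quadratic in `t` whose maximum, attained at `t = c(a + b)/(4|ab|)`, is that same bound;
the hypothesis `|c(a + b)| ≤ 4|ab|` says exactly that this `t` lies in `[-1, 1]`.
-/

open Complex ComplexConjugate

namespace BidiscQuadratic

def quadForm (a b c : ℝ) (z₁ z₂ : ℂ) : ℂ := a * z₁ ^ 2 + b * z₂ ^ 2 + c * z₁ * z₂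

theorem neg_four_mul_mul_normSq_quadForm (a b c : ℝ) (z₁ z₂ : ℂ) :
    -(4 * a * b) * normSq (quadForm a b c z₁ z₂) =
      (c ^ 2 - 4 * a * b) * (a * normSq z₁ - b * normSq z₂) ^ 2 -
        (4 * a * b * (z₁ * conj z₂).re + c * (a * normSq z₁ + b * normSq z₂)) ^ 2 := by
  simp only [quadForm, normSq_apply, add_re, add_im, mul_re, mul_im, ofReal_re, ofReal_im,
    conj_re, conj_im, pow_two]
  ring

theorem sq_mul_sub_mul_le_sq_sub {a b n₁ n₂ : ℝ} (hab : a * b ≤ 0) (h₁ : 0 ≤ n₁) (h₁' : n₁ ≤ 1)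
    (h₂ : 0 ≤ n₂) (h₂' : n₂ ≤ 1) : (a * n₁ - b * n₂) ^ 2 ≤ (a - b) ^ 2 := by
  have hn₁ : 0 ≤ 1 - n₁ ^ 2 := by nlinarith
  have hn₂ : 0 ≤ 1 - n₂ ^ 2 := by nlinarith
  have hmix : 0 ≤ (1 - n₁) * (1 + n₂) + (1 + n₁) * (1 - n₂) := by nlinarith
  -- `(a - b)² - (a n₁ - b n₂)² = a²(1 - n₁²) + b²(1 - n₂²) - ab · hmix`
  linarith [mul_nonneg (sq_nonneg a) hn₁, mul_nonneg (sq_nonneg b) hn₂,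
    mul_nonneg (neg_nonneg.2 hab) hmix]

theorem normSq_quadForm_le {a b : ℝ} (c : ℝ) (hab : a * b < 0) {z₁ z₂ : ℂ} (h₁ : ‖z₁‖ ≤ 1)
    (h₂ : ‖z₂‖ ≤ 1) :
    normSq (quadForm a b c z₁ z₂) ≤ (a - b) ^ 2 * (1 + c ^ 2 / (4 * |a * b|)) := by
  have hD : 4 * |a * b| = -(4 * a * b) := by rw [abs_of_neg hab]; ring
  have hD₀ : 0 < 4 * |a * b| := mul_pos four_pos (abs_pos.2 hab.ne)
  have hn₁ : normSq z₁ ≤ 1 := by rw [← Complex.sq_norm]; exact pow_le_one₀ (norm_nonneg _) h₁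
  have hn₂ : normSq z₂ ≤ 1 := by rw [← Complex.sq_norm]; exact pow_le_one₀ (norm_nonneg _) h₂
  refine le_of_mul_le_mul_left ?_ hD₀
  calc 4 * |a * b| * normSq (quadForm a b c z₁ z₂)
      ≤ (c ^ 2 - 4 * a * b) * (a * normSq z₁ - b * normSq z₂) ^ 2 := by
        rw [hD, neg_four_mul_mul_normSq_quadForm]
        exact sub_le_self _ (sq_nonneg _)
    _ ≤ (c ^ 2 - 4 * a * b) * (a - b) ^ 2 := by
        refine mul_le_mul_of_nonneg_left ?_ (by nlinarith [sq_nonneg c])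
        exact sq_mul_sub_mul_le_sq_sub hab.le (normSq_nonneg _) hn₁ (normSq_nonneg _) hn₂
    _ = 4 * |a * b| * ((a - b) ^ 2 * (1 + c ^ 2 / (4 * |a * b|))) := by
        rw [mul_left_comm, mul_add, mul_div_cancel₀ _ hD₀.ne', hD]
        ring

theorem normSq_quadForm_conj (a b c : ℝ) (u : ℂ) :
    normSq (quadForm a b c u (conj u)) =
      ((a + b) * (u ^ 2).re + c * normSq u) ^ 2 + ((a - b) * (u ^ 2).im) ^ 2 := by
  simp only [quadForm, normSq_apply, add_re, add_im, mul_re, mul_im, ofReal_re, ofReal_im,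
    conj_re, conj_im, pow_two]
  ring

theorem exists_norm_eq_one_normSq_quadForm_conj (a b c : ℝ) {t : ℝ} (ht : |t| ≤ 1) :
    ∃ u : ℂ, ‖u‖ = 1 ∧
      normSq (quadForm a b c u (conj u)) = ((a + b) * t + c) ^ 2 + (a - b) ^ 2 * (1 - t ^ 2) := by
  obtain ⟨ht₁, ht₂⟩ := abs_le.1 ht
  set p := √((1 + t) / 2)
  set q := √((1 - t) / 2)
  have hp : p ^ 2 = (1 + t) / 2 := Real.sq_sqrt (by linarith)
  have hq : q ^ 2 = (1 - t) / 2 := Real.sq_sqrt (by linarith)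
  have hu : normSq ⟨p, q⟩ = 1 := by rw [normSq_mk, ← sq, ← sq, hp, hq]; ring
  refine ⟨⟨p, q⟩, by rw [norm_def, hu, Real.sqrt_one], ?_⟩
  rw [normSq_quadForm_conj, hu]
  have hre : ((⟨p, q⟩ : ℂ) ^ 2).re = p ^ 2 - q ^ 2 := by
    rw [pow_two (⟨p, q⟩ : ℂ), mul_re]; ring
  have him : ((⟨p, q⟩ : ℂ) ^ 2).im ^ 2 = 4 * p ^ 2 * q ^ 2 := by
    rw [pow_two (⟨p, q⟩ : ℂ), mul_im]; ring
  rw [hre, mul_pow, him, hp, hq]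
  ring

theorem exists_normSq_quadForm_eq {a b c : ℝ} (hab : a * b < 0)
    (hc : |c * (a + b)| ≤ 4 * |a * b|) :
    ∃ z₁ z₂ : ℂ, ‖z₁‖ ≤ 1 ∧ ‖z₂‖ ≤ 1 ∧
      normSq (quadForm a b c z₁ z₂) = (a - b) ^ 2 * (1 + c ^ 2 / (4 * |a * b|)) := by
  have hD₀ : 0 < 4 * |a * b| := mul_pos four_pos (abs_pos.2 hab.ne)
  have ht : |c * (a + b) / (4 * |a * b|)| ≤ 1 := by
    rw [abs_div, abs_of_pos hD₀, div_le_one hD₀]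
    exact hc
  obtain ⟨u, hu, hP⟩ := exists_norm_eq_one_normSq_quadForm_conj a b c ht
  refine ⟨u, conj u, hu.le, by rw [RCLike.norm_conj, hu], ?_⟩
  obtain ⟨ha, hb⟩ := mul_ne_zero_iff.1 hab.ne
  rw [hP, abs_of_neg hab]
  field_simp
  ring

theorem abs_add_abs_mul_sqrt_eq {a b : ℝ} (hab : a * b < 0) (K : ℝ) :
    (|a| + |b|) * √K = √((a - b) ^ 2 * K) := by
  have hsq : (a - b) ^ 2 = (|a| + |b|) ^ 2 := by
    rw [add_sq, sq_abs, sq_abs, mul_assoc, ← abs_mul, abs_of_neg hab]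
    ring
  rw [hsq, Real.sqrt_mul (sq_nonneg _), Real.sqrt_sq (by positivity)]

end BidiscQuadratic

open BidiscQuadratic in
theorem stmt_3 (a b c : ℝ) (hab : a * b < 0) (hc : |c * (a + b)| ≤ 4 * |a * b|) :
    sSup {y : ℝ | ∃ z₁ z₂ : ℂ, ‖z₁‖ ≤ 1 ∧ ‖z₂‖ ≤ 1 ∧
        y = ‖(a:ℂ) * z₁ ^ 2 + (b:ℂ) * z₂ ^ 2 + (c:ℂ) * z₁ * z₂‖} =
      (|a| + |b|) * Real.sqrt (1 + c ^ 2 / (4 * |a * b|)) := by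
  rw [abs_add_abs_mul_sqrt_eq hab]
  refine IsGreatest.csSup_eq ⟨?_, ?_⟩
  · obtain ⟨z₁, z₂, h₁, h₂, hP⟩ := exists_normSq_quadForm_eq hab hc
    exact ⟨z₁, z₂, h₁, h₂, by rw [← hP]; rfl⟩
  · rintro _ ⟨z₁, z₂, h₁, h₂, rfl⟩
    exact Real.sqrt_le_sqrt (normSq_quadForm_le c hab h₁ h₂)
end

section
/- The supremum of |z₁² − z₂² + c z₁ z₂| over the closed unit bidisc {(z₁,z₂) ∈ ℂ² : |z₁| ≤ 1, |z₂| ≤ 1} equals sqrt(4 + c²), for every real c. -/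
/-! With `p = ‖z₁‖²`, `q = ‖z₂‖²` and `t = Re (z₁ · conj z₂)`, the polynomial
`f = z₁² - z₂² + c z₁ z₂` satisfies the Lagrange-type identity
`4 ‖f‖² + (4 t - c (p - q))² = (4 + c²) (p + q)²`.
Hence `‖f‖ ≤ √(4 + c²) (p + q) / 2 ≤ √(4 + c²)` on the bidisc, with equality at `(1, i)`. -/

open Complex ComplexConjugate

theorem four_mul_sq_norm_sq_sub_sq_add_mul_mul (c : ℝ) (z w : ℂ) :
    4 * ‖z ^ 2 - w ^ 2 + c * z * w‖ ^ 2 + (4 * (z * conj w).re - c * (‖z‖ ^ 2 - ‖w‖ ^ 2)) ^ 2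
      = (4 + c ^ 2) * (‖z‖ ^ 2 + ‖w‖ ^ 2) ^ 2 := by
  simp only [Complex.sq_norm]
  simp only [normSq_apply, add_re, add_im, sub_re, sub_im, mul_re, mul_im,
    ofReal_re, ofReal_im, conj_re, conj_im, pow_two]
  ring

theorem two_mul_norm_sq_sub_sq_add_mul_mul_le (c : ℝ) (z w : ℂ) :
    2 * ‖z ^ 2 - w ^ 2 + c * z * w‖ ≤ √(4 + c ^ 2) * (‖z‖ ^ 2 + ‖w‖ ^ 2) := by
  have hsq : (2 * ‖z ^ 2 - w ^ 2 + c * z * w‖) ^ 2 ≤ (4 + c ^ 2) * (‖z‖ ^ 2 + ‖w‖ ^ 2) ^ 2 := by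
    nlinarith [four_mul_sq_norm_sq_sub_sq_add_mul_mul c z w,
      sq_nonneg (4 * (z * conj w).re - c * (‖z‖ ^ 2 - ‖w‖ ^ 2))]
  calc 2 * ‖z ^ 2 - w ^ 2 + c * z * w‖
      ≤ √((4 + c ^ 2) * (‖z‖ ^ 2 + ‖w‖ ^ 2) ^ 2) := Real.le_sqrt_of_sq_le hsq
    _ = √(4 + c ^ 2) * (‖z‖ ^ 2 + ‖w‖ ^ 2) := by
      rw [Real.sqrt_mul (by positivity), Real.sqrt_sq (by positivity)]

theorem norm_sq_sub_sq_add_mul_mul_le_of_norm_le_one (c : ℝ) {z w : ℂ}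
    (hz : ‖z‖ ≤ 1) (hw : ‖w‖ ≤ 1) :
    ‖z ^ 2 - w ^ 2 + c * z * w‖ ≤ √(4 + c ^ 2) := by
  have hsum : ‖z‖ ^ 2 + ‖w‖ ^ 2 ≤ 2 := by
    nlinarith [norm_nonneg z, norm_nonneg w]
  nlinarith [two_mul_norm_sq_sub_sq_add_mul_mul_le c z w, Real.sqrt_nonneg (4 + c ^ 2)]

theorem norm_one_sub_I_sq_add_mul_I (c : ℝ) :
    ‖(1 : ℂ) ^ 2 - I ^ 2 + c * 1 * I‖ = √(4 + c ^ 2) := by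
  have h : (1 : ℂ) ^ 2 - I ^ 2 + c * 1 * I = ⟨2, c⟩ := by
    apply Complex.ext <;> norm_num
  rw [h, norm_def, normSq_mk]
  ring_nf

theorem stmt_4 (c : ℝ) :
    sSup {y : ℝ | ∃ z₁ z₂ : ℂ, ‖z₁‖ ≤ 1 ∧ ‖z₂‖ ≤ 1 ∧
        y = ‖z₁ ^ 2 - z₂ ^ 2 + (c:ℂ) * z₁ * z₂‖} = Real.sqrt (4 + c ^ 2) := by
  refine IsGreatest.csSup_eq ⟨⟨1, I, by simp, by simp, (norm_one_sub_I_sq_add_mul_I c).symm⟩, ?_⟩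
  rintro y ⟨z₁, z₂, h₁, h₂, rfl⟩
  exact norm_sq_sub_sq_add_mul_mul_le_of_norm_le_one c h₁ h₂
end

section
/- For every real c and all complex z₁, z₂ with |z₁| ≤ 1 and |z₂| ≤ 1, one has |z₁² − z₂² + c z₁ z₂| ≤ sqrt(4 + c²). -/
/-!
With `s = c / 2`, the expression is the bilinear form `z₁ w₁ + z₂ w₂` where
`(w₁, w₂) = (z₁ + s z₂, s z₁ - z₂)`. The real matrix `[[1, s], [s, -1]]` is `√(1 + s²)` times a
reflection, so `‖w‖² = (1 + s²) ‖z‖²`, and Cauchy–Schwarz gives the bound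
`√(1 + s²) ‖z‖² ≤ 2 √(1 + s²) = √(4 + c²)`.
-/

theorem norm_add_smul_sq_add_norm_smul_sub_sq {E : Type*} [SeminormedAddCommGroup E]
    [InnerProductSpace ℝ E] (s : ℝ) (x y : E) :
    ‖x + s • y‖ ^ 2 + ‖s • x - y‖ ^ 2 = (1 + s ^ 2) * (‖x‖ ^ 2 + ‖y‖ ^ 2) := by
  rw [norm_add_sq_real, norm_sub_sq_real, norm_smul, norm_smul, inner_smul_left,
    inner_smul_right, real_inner_comm y x, Real.norm_eq_abs, mul_pow, mul_pow, sq_abs]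
  simp only [conj_trivial]
  ring

theorem Complex.norm_mul_add_mul_sq_le (a b u v : ℂ) :
    ‖a * u + b * v‖ ^ 2 ≤ (‖a‖ ^ 2 + ‖b‖ ^ 2) * (‖u‖ ^ 2 + ‖v‖ ^ 2) := by
  have htri : ‖a * u + b * v‖ ≤ ‖a‖ * ‖u‖ + ‖b‖ * ‖v‖ := by
    simpa only [norm_mul] using norm_add_le (a * u) (b * v)
  calc ‖a * u + b * v‖ ^ 2 ≤ (‖a‖ * ‖u‖ + ‖b‖ * ‖v‖) ^ 2 := by gcongr
    _ ≤ (‖a‖ ^ 2 + ‖b‖ ^ 2) * (‖u‖ ^ 2 + ‖v‖ ^ 2) := by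
      nlinarith [sq_nonneg (‖a‖ * ‖v‖ - ‖b‖ * ‖u‖)]

theorem stmt_6 (c : ℝ) (z₁ z₂ : ℂ) (h₁ : ‖z₁‖ ≤ 1) (h₂ : ‖z₂‖ ≤ 1) :
    ‖z₁ ^ 2 - z₂ ^ 2 + (c:ℂ) * z₁ * z₂‖ ≤ Real.sqrt (4 + c ^ 2) := by
  set s : ℝ := c / 2
  have hform : z₁ ^ 2 - z₂ ^ 2 + (c:ℂ) * z₁ * z₂ = z₁ * (z₁ + s • z₂) + z₂ * (s • z₁ - z₂) := by
    simp only [s, Complex.real_smul]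
    push_cast
    ring
  have hz : ‖z₁‖ ^ 2 + ‖z₂‖ ^ 2 ≤ 2 := by
    linarith [pow_le_one₀ (norm_nonneg z₁) h₁ (n := 2), pow_le_one₀ (norm_nonneg z₂) h₂ (n := 2)]
  apply Real.le_sqrt_of_sq_le
  calc ‖z₁ ^ 2 - z₂ ^ 2 + (c:ℂ) * z₁ * z₂‖ ^ 2
      ≤ (‖z₁‖ ^ 2 + ‖z₂‖ ^ 2) * (‖z₁ + s • z₂‖ ^ 2 + ‖s • z₁ - z₂‖ ^ 2) := by
        rw [hform]; exact Complex.norm_mul_add_mul_sq_le _ _ _ _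
    _ = (1 + s ^ 2) * (‖z₁‖ ^ 2 + ‖z₂‖ ^ 2) ^ 2 := by
        rw [norm_add_smul_sq_add_norm_smul_sub_sq]; ring
    _ ≤ (1 + s ^ 2) * 2 ^ 2 := by gcongr
    _ = 4 + c ^ 2 := by ring
end

section
/- Suppose D: ℕ → [1, ∞) satisfies: for every m ≥ 2 and every m-homogeneous polynomial P on ℂ^N (any N), the ℓ_{2m/(m+1)}-norm of the coefficients of P is at most D(m) times the sup norm of P on the unit polydisc. Then D(m) ≥ (2 + 2^m)^((m+1)/(2m)) / sqrt(4 + 2^(m+1)) for every m ≥ 2. -/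
/-!
Test the inequality on `P(z) = z₀ ^ (m - 2) (z₀² - z₁² + c z₀ z₁)` with `c = 2 ^ ((m + 1) / 2)`
(a monomial factor in fresh variables, as in the paper, would serve equally well). Its coefficients
are `1, -1, c`, so for `p = 2m / (m + 1)` their `ℓ_p`-norm is `(2 + c ^ p) ^ (1 / p) =
(2 + 2 ^ m) ^ ((m + 1) / 2m)`, while `|P| ≤ |z₀² - z₁² + c z₀ z₁| ≤ √(4 + c²) = √(4 + 2 ^ (m + 1))`
on the closed unit bidisc.
-/

open Finset Finsupp

-- With `x = |z|²`, `y = |w|²`, `s = Re (z w̄)`: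
-- `|z² - w² + c z w|² = (x + y)² + c² x y - 4 s² + 2 c (x - y) s ≤ (1 + c² / 4) (x + y)²`,
-- by completing the square in `s`.
lemma norm_sq_sub_sq_add_mul_le {z w : ℂ} (hz : ‖z‖ ≤ 1) (hw : ‖w‖ ≤ 1) (c : ℝ) :
    ‖z ^ 2 - w ^ 2 + c * z * w‖ ≤ √(4 + c ^ 2) := by
  rw [← Real.sqrt_sq (norm_nonneg _), Complex.sq_norm]
  apply Real.sqrt_le_sqrt
  have hz2 : Complex.normSq z ≤ 1 := by rw [← Complex.sq_norm]; exact pow_le_one₀ (norm_nonneg z) hz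
  have hw2 : Complex.normSq w ≤ 1 := by rw [← Complex.sq_norm]; exact pow_le_one₀ (norm_nonneg w) hw
  rw [Complex.normSq_apply] at hz2 hw2 ⊢
  simp only [pow_two, Complex.add_re, Complex.add_im, Complex.sub_re, Complex.sub_im,
    Complex.mul_re, Complex.mul_im, Complex.ofReal_re, Complex.ofReal_im]
  set a := z.re; set b := z.im; set p := w.re; set q := w.im
  have hsum : (a * a + b * b + p * p + q * q) ^ 2 ≤ 4 := by nlinarith
  nlinarith [sq_nonneg (4 * (a * p + b * q) - c * ((a * a + b * b) - (p * p + q * q))),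
    mul_nonneg (sq_nonneg c) (sub_nonneg.2 hsum)]

section ThreeSingles

variable {α R : Type*} [AddCommMonoid R] {a₁ a₂ a₃ : α}

lemma support_single_add_single_add_single_subset [DecidableEq α] (b₁ b₂ b₃ : R) :
    (single a₁ b₁ + single a₂ b₂ + single a₃ b₃).support ⊆ {a₁, a₂, a₃} := by
  intro a ha
  contrapose! ha
  simp only [mem_insert, mem_singleton, not_or] at ha
  simp [Ne.symm ha.1, Ne.symm ha.2.1, Ne.symm ha.2.2]

lemma sum_support_single_add_single_add_single {M : Type*} [AddCommMonoid M]
    (h₁₂ : a₁ ≠ a₂) (h₁₃ : a₁ ≠ a₃) (h₂₃ : a₂ ≠ a₃) (b₁ b₂ b₃ : R) {g : α → R → M}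
    (hg : ∀ a, g a 0 = 0) :
    ∑ a ∈ (single a₁ b₁ + single a₂ b₂ + single a₃ b₃).support,
        g a ((single a₁ b₁ + single a₂ b₂ + single a₃ b₃) a) =
      g a₁ b₁ + g a₂ b₂ + g a₃ b₃ := by
  classical
  rw [← Finsupp.sum, Finsupp.sum_of_support_subset _
    (support_single_add_single_add_single_subset b₁ b₂ b₃) _ (fun a _ => hg a)]
  simp [h₁₂, h₁₃, h₂₃, h₁₂.symm, h₁₃.symm, h₂₃.symm, add_assoc]

end ThreeSingles

noncomputable def witnessPoly (m : ℕ) (c : ℂ) : (Fin 2 →₀ ℕ) →₀ ℂ :=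
  single (equivFunOnFinite.symm ![m, 0]) 1 + single (equivFunOnFinite.symm ![m - 2, 2]) (-1) +
    single (equivFunOnFinite.symm ![m - 1, 1]) c

lemma sum_support_witnessPoly {M : Type*} [AddCommMonoid M] (m : ℕ) (c : ℂ)
    {g : (Fin 2 →₀ ℕ) → ℂ → M} (hg : ∀ α, g α 0 = 0) :
    ∑ α ∈ (witnessPoly m c).support, g α (witnessPoly m c α) =
      g (equivFunOnFinite.symm ![m, 0]) 1 + g (equivFunOnFinite.symm ![m - 2, 2]) (-1) +
        g (equivFunOnFinite.symm ![m - 1, 1]) c := by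
  refine sum_support_single_add_single_add_single ?_ ?_ ?_ _ _ _ hg <;>
    exact fun h => absurd (DFunLike.congr_fun h 1) (by simp)

lemma degree_eq_of_mem_support_witnessPoly {m : ℕ} (hm : 2 ≤ m) (c : ℂ) :
    ∀ α ∈ (witnessPoly m c).support, (α.sum fun _ k => k) = m := by
  intro α hα
  have h := support_single_add_single_add_single_subset _ _ _ hα
  simp only [mem_insert, mem_singleton] at h
  rcases h with rfl | rfl | rfl <;> simp [Finsupp.sum_fintype, Fin.sum_univ_two] <;> omega

lemma coeff_norm_rpow_sum_witnessPoly (m : ℕ) (c : ℂ) {p : ℝ} (hp : p ≠ 0) :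
    ∑ α ∈ (witnessPoly m c).support, ‖witnessPoly m c α‖ ^ p = 2 + ‖c‖ ^ p := by
  rw [sum_support_witnessPoly m c (g := fun _ b => ‖b‖ ^ p) (fun _ => by simp [hp])]
  simp only [norm_one, norm_neg, Real.one_rpow]
  ring

lemma eval_witnessPoly {m : ℕ} (hm : 2 ≤ m) (c : ℂ) (z : Fin 2 → ℂ) :
    ∑ α ∈ (witnessPoly m c).support, witnessPoly m c α * ∏ i, z i ^ α i =
      z 0 ^ (m - 2) * (z 0 ^ 2 - z 1 ^ 2 + c * z 0 * z 1) := by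
  rw [sum_support_witnessPoly m c (g := fun α b => b * ∏ i, z i ^ α i) (fun _ => zero_mul _)]
  obtain ⟨n, rfl⟩ := Nat.exists_eq_add_of_le' hm
  simp [Fin.prod_univ_two]
  ring

lemma sSup_norm_eval_witnessPoly_le {m : ℕ} (hm : 2 ≤ m) (c : ℝ) :
    sSup {y : ℝ | ∃ z : Fin 2 → ℂ, (∀ i, ‖z i‖ ≤ 1) ∧
      y = ‖∑ α ∈ (witnessPoly m c).support, witnessPoly m c α * ∏ i, z i ^ α i‖} ≤
      √(4 + c ^ 2) := by
  refine Real.sSup_le ?_ (Real.sqrt_nonneg _)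
  rintro y ⟨z, hz, rfl⟩
  rw [eval_witnessPoly hm, norm_mul, norm_pow]
  calc ‖z 0‖ ^ (m - 2) * ‖z 0 ^ 2 - z 1 ^ 2 + c * z 0 * z 1‖ ≤ 1 * √(4 + c ^ 2) := by
        gcongr
        · exact pow_le_one₀ (norm_nonneg _) (hz 0)
        · exact norm_sq_sub_sq_add_mul_le (hz 0) (hz 1) c
    _ = √(4 + c ^ 2) := one_mul _

theorem stmt_7_general (D : ℕ → ℝ)
    (hBH : ∀ (m : ℕ), 2 ≤ m → ∀ (N : ℕ) (a : (Fin N →₀ ℕ) →₀ ℂ),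
      (∀ α ∈ a.support, (α.sum fun _ k => k) = m) →
      (∑ α ∈ a.support, ‖a α‖ ^ ((2 * (m:ℝ)) / (m + 1))) ^ (((m:ℝ) + 1) / (2 * m)) ≤
        D m * sSup {y : ℝ | ∃ z : Fin N → ℂ, (∀ i, ‖z i‖ ≤ 1) ∧
          y = ‖∑ α ∈ a.support, a α * ∏ i, z i ^ α i‖}) :
    ∀ m : ℕ, 2 ≤ m →
      (2 + (2:ℝ) ^ (m:ℝ)) ^ (((m:ℝ) + 1) / (2 * m)) /
        Real.sqrt (4 + 2 ^ ((m:ℝ) + 1)) ≤ D m := by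
  intro m hm
  set c : ℝ := 2 ^ (((m:ℝ) + 1) / 2)
  have hc_sq : c ^ 2 = 2 ^ ((m:ℝ) + 1) := by
    rw [← Real.rpow_natCast, ← Real.rpow_mul zero_le_two]
    norm_num
  have hc_rpow : ‖(c : ℂ)‖ ^ (2 * (m:ℝ) / (m + 1)) = 2 ^ (m:ℝ) := by
    rw [Complex.norm_real, Real.norm_of_nonneg (by positivity), ← Real.rpow_mul zero_le_two]
    field_simp
  have hP := hBH m hm 2 (witnessPoly m c) (degree_eq_of_mem_support_witnessPoly hm c)
  rw [coeff_norm_rpow_sum_witnessPoly m c (by positivity), hc_rpow] at hP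
  have hsup := sSup_norm_eval_witnessPoly_le hm c
  rw [hc_sq] at hsup
  have hD : 0 < D m := pos_of_mul_pos_left (hP.trans_lt' (by positivity))
    (Real.sSup_nonneg (by rintro y ⟨z, -, rfl⟩; exact norm_nonneg _))
  rw [div_le_iff₀ (by positivity)]
  exact hP.trans (mul_le_mul_of_nonneg_left hsup hD.le)

theorem stmt_7 (D : ℕ → ℝ) (hD : ∀ m, 1 ≤ D m)
    (hBH : ∀ (m : ℕ), 2 ≤ m → ∀ (N : ℕ) (a : (Fin N →₀ ℕ) →₀ ℂ),
      (∀ α ∈ a.support, (α.sum fun _ k => k) = m) →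
      (∑ α ∈ a.support, ‖a α‖ ^ ((2 * (m:ℝ)) / (m + 1))) ^ (((m:ℝ) + 1) / (2 * m)) ≤
        D m * sSup {y : ℝ | ∃ z : Fin N → ℂ, (∀ i, ‖z i‖ ≤ 1) ∧
          y = ‖∑ α ∈ a.support, a α * ∏ i, z i ^ α i‖}) :
    ∀ m : ℕ, 2 ≤ m →
      (2 + (2:ℝ) ^ (m:ℝ)) ^ (((m:ℝ) + 1) / (2 * m)) /
        Real.sqrt (4 + 2 ^ ((m:ℝ) + 1)) ≤ D m :=
  stmt_7_general D hBH
end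

section
/- For every integer m ≥ 2 and real c, the m-homogeneous polynomial P_m(z) = z₃⋯z_m·(z₁² − z₂² + c z₁ z₂) on ℂ^m has sup norm on the unit polydisc equal to sqrt(4 + c²), and the ℓ_{2m/(m+1)}-norm of its coefficients equals (2 + c^(2m/(m+1)))^((m+1)/(2m)) when c ≥ 0. -/
/-!
With `p = ‖a‖²`, `q = ‖b‖²` and `x = Re (a b̄)` one has the identity
`4 ‖a² - b² + c a b‖² + (4 x - c (p - q))² = (4 + c²) (p + q)²`,
so `‖a² - b² + c a b‖ ≤ √(4 + c²)` on the closed bidisc, while the remaining factors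
`z₃ ⋯ z_m` have modulus at most `1`. Equality holds at `z₁ = i`, `z₂ = ⋯ = z_m = 1`.
-/

open Complex ComplexConjugate

theorem four_mul_norm_sq_sub_sq_add_mul_sq_add_sq (c : ℝ) (a b : ℂ) :
    4 * ‖a ^ 2 - b ^ 2 + c * a * b‖ ^ 2 + (4 * (a * conj b).re - c * (‖a‖ ^ 2 - ‖b‖ ^ 2)) ^ 2 =
      (4 + c ^ 2) * (‖a‖ ^ 2 + ‖b‖ ^ 2) ^ 2 := by
  simp only [Complex.sq_norm]
  simp only [normSq_apply, pow_two, add_re, add_im, sub_re, sub_im, mul_re, mul_im,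
    ofReal_re, ofReal_im, conj_re, conj_im]
  ring

theorem norm_sq_sub_sq_add_mul_le_s8 (c : ℝ) (a b : ℂ) :
    ‖a ^ 2 - b ^ 2 + c * a * b‖ ≤ √(4 + c ^ 2) * ((‖a‖ ^ 2 + ‖b‖ ^ 2) / 2) := by
  refine le_of_pow_le_pow_left₀ two_ne_zero (by positivity) ?_
  rw [mul_pow, Real.sq_sqrt (by positivity)]
  nlinarith [four_mul_norm_sq_sub_sq_add_mul_sq_add_sq c a b,
    sq_nonneg (4 * (a * conj b).re - c * (‖a‖ ^ 2 - ‖b‖ ^ 2))]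

theorem norm_sq_sub_sq_add_mul_le_of_norm_le_one (c : ℝ) {a b : ℂ} (ha : ‖a‖ ≤ 1) (hb : ‖b‖ ≤ 1) :
    ‖a ^ 2 - b ^ 2 + c * a * b‖ ≤ √(4 + c ^ 2) := by
  refine (norm_sq_sub_sq_add_mul_le_s8 c a b).trans (mul_le_of_le_one_right (by positivity) ?_)
  have := pow_le_one₀ (norm_nonneg a) ha (n := 2)
  have := pow_le_one₀ (norm_nonneg b) hb (n := 2)
  linarith

theorem norm_I_sq_sub_one_sq_add_mul (c : ℝ) : ‖I ^ 2 - 1 ^ 2 + c * I * 1‖ = √(4 + c ^ 2) := by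
  rw [I_sq, show (-1 - 1 ^ 2 + c * I * 1 : ℂ) = ⟨-2, c⟩ by simp [Complex.ext_iff]; norm_num]
  rw [norm_def, normSq_mk]
  ring_nf

theorem isGreatest_norm_prod_mul_sq_sub_sq_add_mul {ι : Type*} (s : Finset ι) {i j : ι}
    (hij : i ≠ j) (hi : i ∉ s) (c : ℝ) :
    IsGreatest {y : ℝ | ∃ z : ι → ℂ, (∀ k, ‖z k‖ ≤ 1) ∧
        y = ‖(∏ k ∈ s, z k) * (z i ^ 2 - z j ^ 2 + c * z i * z j)‖} (√(4 + c ^ 2)) := by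
  classical
  refine ⟨⟨Function.update 1 i I, fun k => ?_, ?_⟩, ?_⟩
  · rcases eq_or_ne k i with rfl | hk <;> simp [*]
  · rw [Finset.prod_eq_one fun k hk => by rw [Function.update_of_ne (ne_of_mem_of_not_mem hk hi)]; rfl,
      one_mul, Function.update_self, Function.update_of_ne hij.symm, Pi.one_apply,
      norm_I_sq_sub_one_sq_add_mul]
  · rintro y ⟨z, hz, rfl⟩
    rw [norm_mul, norm_prod]
    exact (mul_le_of_le_one_left (norm_nonneg _)
      (Finset.prod_le_one (fun k _ => norm_nonneg _) fun k _ => hz k)).trans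
      (norm_sq_sub_sq_add_mul_le_of_norm_le_one c (hz i) (hz j))

theorem stmt_8 (m : ℕ) (hm : 2 ≤ m) (c : ℝ) :
    sSup {y : ℝ | ∃ z : Fin m → ℂ, (∀ i, ‖z i‖ ≤ 1) ∧
        y = ‖(∏ i ∈ Finset.univ.filter fun i : Fin m => 2 ≤ (i:ℕ), z i) *
              (z ⟨0, by omega⟩ ^ 2 - z ⟨1, by omega⟩ ^ 2 +
                (c:ℂ) * z ⟨0, by omega⟩ * z ⟨1, by omega⟩)‖} =
      Real.sqrt (4 + c ^ 2) ∧
    (0 ≤ c →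
      (‖(1:ℂ)‖ ^ ((2 * (m:ℝ)) / (m + 1)) + ‖(-1:ℂ)‖ ^ ((2 * (m:ℝ)) / (m + 1)) +
          |c| ^ ((2 * (m:ℝ)) / (m + 1))) ^ (((m:ℝ) + 1) / (2 * m)) =
        (2 + c ^ ((2 * (m:ℝ)) / (m + 1))) ^ (((m:ℝ) + 1) / (2 * m))) := by
  refine ⟨(isGreatest_norm_prod_mul_sq_sub_sq_add_mul _ ?_ ?_ c).csSup_eq, fun hc => ?_⟩
  · simp [Fin.ext_iff]
  · simp
  · rw [norm_neg, norm_one, Real.one_rpow, abs_of_nonneg hc, one_add_one_eq_two]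
end

section
/- For real a, b, c with ab < 0, the maximum over |z₁|=|z₂|=1 of |a z₁² + b z₂² + c z₁ z₂|² equals (|a|+|b|)²·(1 + c²/(4|ab|)), provided |c(a+b)| ≤ 4|ab|. -/
lemma stmt_12_aux (a b c : ℝ) (hab : a * b < 0) (z₁ z₂ : ℂ)
    (h1 : ‖z₁‖ = 1) (h2 : ‖z₂‖ = 1) :
    ‖(a:ℂ) * z₁ ^ 2 + (b:ℂ) * z₂ ^ 2 + (c:ℂ) * z₁ * z₂‖ ^ 2 ≤
      (a - b) ^ 2 + c ^ 2 * (a - b) ^ 2 / (-(4 * (a * b))) := by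
  have e1 : z₁ * (starRingEnd ℂ) z₁ = 1 := by
    rw [Complex.mul_conj]
    norm_cast
    rw [Complex.normSq_eq_norm_sq, h1]; norm_num
  have e2 : z₂ * (starRingEnd ℂ) z₂ = 1 := by
    rw [Complex.mul_conj]
    norm_cast
    rw [Complex.normSq_eq_norm_sq, h2]; norm_num
  set u : ℂ := z₁ * (starRingEnd ℂ) z₂ with hu
  have hfac : (a:ℂ) * z₁ ^ 2 + (b:ℂ) * z₂ ^ 2 + (c:ℂ) * z₁ * z₂ =
      (z₁ * z₂) * ((a:ℂ) * u + (b:ℂ) * (starRingEnd ℂ) u + c) := by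
    have e3 : (starRingEnd ℂ) u = (starRingEnd ℂ) z₁ * z₂ := by
      simp [hu]
    rw [e3, hu]
    linear_combination (-(a:ℂ) * z₁ ^ 2) * e2 + (-(b:ℂ) * z₂ ^ 2) * e1
  have hun : ‖u‖ = 1 := by
    rw [hu, norm_mul, h1, one_mul, RCLike.norm_conj, h2]
  set p : ℝ := u.re with hp
  set q : ℝ := u.im with hq
  have hpq : p ^ 2 + q ^ 2 = 1 := by
    have := Complex.normSq_eq_norm_sq u
    rw [hun] at this
    rw [Complex.normSq_apply] at this
    nlinarith [this]
  have hre : ((a:ℂ) * u + (b:ℂ) * (starRingEnd ℂ) u + c).re = (a + b) * p + c := by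
    simp [Complex.add_re, Complex.mul_re, hp]
    ring
  have him : ((a:ℂ) * u + (b:ℂ) * (starRingEnd ℂ) u + c).im = (a - b) * q := by
    simp [Complex.add_im, Complex.mul_im, hq]
    ring
  have hval : ‖(a:ℂ) * z₁ ^ 2 + (b:ℂ) * z₂ ^ 2 + (c:ℂ) * z₁ * z₂‖ ^ 2 =
      ((a + b) * p + c) ^ 2 + ((a - b) * q) ^ 2 := by
    rw [hfac, norm_mul, norm_mul, h1, h2, one_mul, one_mul,
      Complex.sq_norm, Complex.normSq_apply, hre, him]
    ring
  rw [hval]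
  have hd : (0:ℝ) < -(4 * (a * b)) := by linarith
  have key : (a - b) ^ 2 + c ^ 2 * (a - b) ^ 2 / (-(4 * (a * b))) -
      (((a + b) * p + c) ^ 2 + ((a - b) * q) ^ 2) =
      (4 * a * b * p + c * (a + b)) ^ 2 / (-(4 * (a * b))) +
        (a - b) ^ 2 * (1 - p ^ 2 - q ^ 2) := by
    have ha : a ≠ 0 := by intro h; rw [h] at hab; simp at hab
    have hb : b ≠ 0 := by intro h; rw [h] at hab; simp at hab
    field_simp
    ring
  have h0 : (0:ℝ) ≤ (4 * a * b * p + c * (a + b)) ^ 2 / (-(4 * (a * b))) :=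
    div_nonneg (sq_nonneg _) hd.le
  nlinarith [key, h0, hpq]

theorem stmt_12 (a b c : ℝ) (hab : a * b < 0) (hc : |c * (a + b)| ≤ 4 * |a * b|) :
    sSup {y : ℝ | ∃ z₁ z₂ : ℂ, ‖z₁‖ = 1 ∧ ‖z₂‖ = 1 ∧
        y = ‖(a:ℂ) * z₁ ^ 2 + (b:ℂ) * z₂ ^ 2 + (c:ℂ) * z₁ * z₂‖ ^ 2} =
      (|a| + |b|) ^ 2 * (1 + c ^ 2 / (4 * |a * b|)) := by
  have ha : a ≠ 0 := by intro h; rw [h] at hab; simp at hab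
  have hb : b ≠ 0 := by intro h; rw [h] at hab; simp at hab
  have habs : |a * b| = -(a * b) := abs_of_neg hab
  have hM' : (|a| + |b|) ^ 2 * (1 + c ^ 2 / (4 * |a * b|)) =
      (a - b) ^ 2 + c ^ 2 * (a - b) ^ 2 / (-(4 * (a * b))) := by
    have h1 : (|a| + |b|) ^ 2 = (a - b) ^ 2 := by
      nlinarith [sq_abs a, sq_abs b, abs_mul a b, habs]
    rw [h1, habs]
    have : a * b ≠ 0 := ne_of_lt hab
    field_simp
  rw [hM']
  -- the maximizer
  set t : ℝ := -(c * (a + b)) / (4 * (a * b)) with ht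
  have ht1 : t ^ 2 ≤ 1 := by
    have h4 : (0:ℝ) < -(4 * (a * b)) := by linarith
    rw [ht, div_pow]
    rw [div_le_one (by positivity)]
    have := abs_nonneg (c * (a + b))
    nlinarith [sq_abs (c * (a + b)), sq_abs (a * b), abs_nonneg (a * b), hc]
  set s : ℝ := Real.sqrt (1 - t ^ 2) with hs
  have hs2 : s ^ 2 = 1 - t ^ 2 := Real.sq_sqrt (by linarith)
  set z : ℂ := ⟨t, s⟩ with hz
  have hzn : Complex.normSq z = 1 := by
    rw [hz, Complex.normSq_mk]; linear_combination hs2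
  have hz1 : ‖z‖ = 1 := by
    rw [Complex.norm_def, hzn, Real.sqrt_one]
  have hmem : (a - b) ^ 2 + c ^ 2 * (a - b) ^ 2 / (-(4 * (a * b))) ∈
      {y : ℝ | ∃ z₁ z₂ : ℂ, ‖z₁‖ = 1 ∧ ‖z₂‖ = 1 ∧
        y = ‖(a:ℂ) * z₁ ^ 2 + (b:ℂ) * z₂ ^ 2 + (c:ℂ) * z₁ * z₂‖ ^ 2} := by
    refine ⟨z, 1, hz1, by norm_num, ?_⟩
    have hw : (a:ℂ) * z ^ 2 + (b:ℂ) * 1 ^ 2 + (c:ℂ) * z * 1 =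
        ⟨a * (t ^ 2 - s ^ 2) + b + c * t, 2 * a * t * s + c * s⟩ := by
      apply Complex.ext <;>
        simp [hz, pow_two, Complex.mul_re, Complex.mul_im, Complex.add_re, Complex.add_im] <;>
        ring
    rw [hw, Complex.sq_norm, Complex.normSq_mk]
    have hA : a * (t ^ 2 - s ^ 2) + b + c * t = 2 * a * t ^ 2 - a + b + c * t := by
      linear_combination (-a) * hs2
    have hB : (2 * a * t * s + c * s) * (2 * a * t * s + c * s) =
        (2 * a * t + c) ^ 2 * (1 - t ^ 2) := by
      linear_combination (2 * a * t + c) ^ 2 * hs2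
    rw [hA, hB, ht]
    field_simp
    ring
  apply le_antisymm
  · apply Real.sSup_le
    · rintro y ⟨z₁, z₂, h1, h2, rfl⟩
      exact stmt_12_aux a b c hab z₁ z₂ h1 h2
    · have h4 : (0:ℝ) < -(4 * (a * b)) := by linarith
      have := div_nonneg (by positivity : (0:ℝ) ≤ c ^ 2 * (a - b) ^ 2) h4.le
      nlinarith [sq_nonneg (a - b)]
  · exact le_csSup ⟨_, fun y ⟨z₁, z₂, h1, h2, hy⟩ => hy ▸ stmt_12_aux a b c hab z₁ z₂ h1 h2⟩ hmem
end

section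
/- For every natural number m ≥ 2, the sequence of lower bounds L(m) = (2 + 2^m)^((m+1)/(2m)) / sqrt(4 + 2^(m+1)) is strictly decreasing in m. -/
/-!
Since `4 + 2^(m+1) = 2 (2 + 2^m)`, the bound simplifies to `L(m) = √((2 + 2^m)^(1/m) / 2)`, so it
suffices that `k ↦ (c + a^k)^(1/k)` strictly decreases for `a ≥ 1`, `c > 0`. Raising to the power
`m n`, this becomes `(c + a^n)^m < (c + a^m)^n` for `m < n`, which follows by writing
`c + a^k = a^k (1 + c / a^k)`: the factor `1 + c / a^k` is greater than `1` and decreases in `k`.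
-/

lemma add_pow_pow_lt_add_pow_pow {a c : ℝ} (ha : 1 ≤ a) (hc : 0 < c) {m n : ℕ} (hmn : m < n) :
    (c + a ^ n) ^ m < (c + a ^ m) ^ n := by
  have ha₀ : 0 < a := by linarith
  have factor (k : ℕ) : c + a ^ k = a ^ k * (1 + c / a ^ k) := by
    field_simp [(pow_pos ha₀ k).ne']
    ring
  have hbase : 1 < 1 + c / a ^ m := by have := div_pos hc (pow_pos ha₀ m); linarith
  calc (c + a ^ n) ^ m = (a ^ m) ^ n * (1 + c / a ^ n) ^ m := by
        rw [factor, mul_pow, ← pow_mul, ← pow_mul, mul_comm n]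
    _ ≤ (a ^ m) ^ n * (1 + c / a ^ m) ^ m := by
        gcongr
    _ < (a ^ m) ^ n * (1 + c / a ^ m) ^ n := by
        gcongr
    _ = (c + a ^ m) ^ n := by rw [factor m, mul_pow]

lemma strictAntiOn_add_pow_rpow_inv {a c : ℝ} (ha : 1 ≤ a) (hc : 0 < c) :
    StrictAntiOn (fun k : ℕ => (c + a ^ k) ^ (k : ℝ)⁻¹) (Set.Ioi 0) := by
  intro m hm n hn hmn
  have hpos (k : ℕ) : 0 ≤ c + a ^ k := by have := pow_pos (by linarith : (0:ℝ) < a) k; linarith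
  have root_pow (k j : ℕ) (hk : k ≠ 0) : ((c + a ^ k) ^ (k : ℝ)⁻¹) ^ (k * j) = (c + a ^ k) ^ j := by
    rw [pow_mul, Real.rpow_inv_natCast_pow (hpos k) hk]
  apply lt_of_pow_lt_pow_left₀ (m * n) (by positivity)
  rw [mul_comm m n, root_pow n m (Nat.pos_iff_ne_zero.mp hn), mul_comm n m,
    root_pow m n (Nat.pos_iff_ne_zero.mp hm)]
  exact add_pow_pow_lt_add_pow_pow ha hc hmn

lemma rpow_div_sqrt_two_mul {X x : ℝ} (hX : 0 < X) (hx : x ≠ 0) :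
    X ^ ((x + 1) / (2 * x)) / √(2 * X) = √(X ^ x⁻¹ / 2) := by
  rw [Real.sqrt_mul zero_le_two, Real.sqrt_div' _ zero_le_two, Real.sqrt_eq_rpow (X ^ x⁻¹),
    Real.sqrt_eq_rpow X, ← Real.rpow_mul hX.le, mul_comm √2, ← div_div, ← Real.rpow_sub hX]
  congr 2
  field_simp
  ring

theorem stmt_17 :
    StrictAntiOn
      (fun m : ℕ =>
        (2 + (2:ℝ) ^ (m:ℝ)) ^ (((m:ℝ) + 1) / (2 * m)) /
          Real.sqrt (4 + 2 ^ ((m:ℝ) + 1)))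
      (Set.Ici 2) := by
  have closed_form (k : ℕ) (hk : 2 ≤ k) :
      (2 + (2:ℝ) ^ (k:ℝ)) ^ (((k:ℝ) + 1) / (2 * k)) / √(4 + 2 ^ ((k:ℝ) + 1)) =
        √((2 + 2 ^ k) ^ (k : ℝ)⁻¹ / 2) := by
    rw [Real.rpow_add two_pos, Real.rpow_one, Real.rpow_natCast,
      show (4:ℝ) + 2 ^ k * 2 = 2 * (2 + 2 ^ k) by ring]
    exact rpow_div_sqrt_two_mul (by positivity) (by positivity)
  intro m hm n hn hmn
  simp only [Set.mem_Ici] at hm hn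
  dsimp only
  rw [closed_form m hm, closed_form n hn]
  have := strictAntiOn_add_pow_rpow_inv one_le_two two_pos
    (Set.mem_Ioi.mpr (by omega : 0 < m)) (Set.mem_Ioi.mpr (by omega : 0 < n)) hmn
  exact Real.sqrt_lt_sqrt (by positivity) (div_lt_div_of_pos_right this two_pos)
end
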